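/- Let m ≥ 1, let T⁽¹⁾ and T⁽²⁾ be distinct m-bit templates, and let M satisfy L := M−m+1 ≥ m. For d with 1 ≤ d ≤ m−1 define e_d = 1 if T⁽¹⁾(i) = T⁽²⁾(i+d) for all i < m−d and e_d = 0 otherwise, and define e_{−d} = 1 if T⁽¹⁾(i+d) = T⁽²⁾(i) for all i < m−d and e_{−d} = 0 otherwise. Let c⁽¹⁾ and c⁽²⁾ be the occurrence counts of T⁽¹⁾ and T⁽²⁾ in a block B drawn uniformly at random from the 2^M equiprobable M-bit blocks. Then Cov(c⁽¹⁾, c⁽²⁾) = Σ_{d=1}^{m−1} (L−d)(e_d + e_{−d})/2^{m+d} + ((L−m)(L−m+1) − L²)/2^{2m}. -/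

import Mathlib

open scoped Classical

/-- `T` occurs in the block `B` at position `k`: `B (k+i) = T i` for all `i < m`. -/
def occursAt {m M : ℕ} (T : Fin m → Bool) (B : Fin M → Bool) (k : ℕ) : Prop :=
  ∀ i : Fin m, ∀ h : k + i.1 < M, B ⟨k + i.1, h⟩ = T i

/-- The number of occurrences of the template `T` in the block `B`. -/
noncomputable def occCount {m M : ℕ} (T : Fin m → Bool) (B : Fin M → Bool) : ℕ :=
  ((Finset.range (M + 1 - m)).filter (fun k => occursAt T B k)).card

/-- Expectation of `f` when the block is drawn uniformly from the `2^M` `M`-bit blocks. -/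
noncomputable def unifExp (M : ℕ) (f : (Fin M → Bool) → ℝ) : ℝ :=
  (∑ B : Fin M → Bool, f B) / 2 ^ M

/-- `e_d` for `d ≥ 1`: equals `1` if `T¹(i) = T²(i+d)` for all `i < m - d`, else `0`. -/
noncomputable def ePlus {m : ℕ} (T1 T2 : Fin m → Bool) (d : ℕ) : ℝ :=
  if ∀ i : ℕ, ∀ h : i < m - d, T1 ⟨i, by omega⟩ = T2 ⟨i + d, by omega⟩ then 1 else 0

/-- `e_{-d}` for `d ≥ 1`: equals `1` if `T¹(i+d) = T²(i)` for all `i < m - d`, else `0`. -/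
noncomputable def eMinus {m : ℕ} (T1 T2 : Fin m → Bool) (d : ℕ) : ℝ :=
  if ∀ i : ℕ, ∀ h : i < m - d, T1 ⟨i + d, by omega⟩ = T2 ⟨i, by omega⟩ then 1 else 0

/-!
Write `c_T = ∑ₖ 1[T occurs at k]`. An occurrence pins `m` bits, so it has probability `2⁻ᵐ`, and
occurrences of `T¹` at `k` and `T²` at `k + d` either disagree on their overlap or together pin
`m + min d m` bits; agreement is exactly `e_{-d}` (and `e_d` for lag `-d`), which fails at `d = 0`
because `T¹ ≠ T²` and is automatic for `d ≥ m`. The joint probability thus depends only on the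
lag, so `E[c¹c²]` collapses to `∑_d (L - d)(…)`, where the lags `d ≥ m` contribute
`(L - m)(L - m + 1)/2^{2m}`; subtracting `E[c¹]E[c²] = L²/2^{2m}` gives the formula.
-/

open Finset

section AgreeOn

variable {ι β : Type*} [Fintype ι] [DecidableEq ι] [Fintype β] [DecidableEq β]

theorem card_filter_forall_mem_eq (S : Finset ι) (f : ι → β) :
    #{B : ι → β | ∀ j ∈ S, B j = f j} = Fintype.card β ^ #Sᶜ := by
  have hpi : ({B : ι → β | ∀ j ∈ S, B j = f j} : Finset _) =
      Fintype.piFinset fun j => if j ∈ S then {f j} else univ := by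
    ext B
    simp only [mem_filter, mem_univ, true_and, Fintype.mem_piFinset]
    refine forall_congr' fun j => ?_
    split_ifs with hj <;> simp [hj]
  rw [hpi, Fintype.card_piFinset]
  simp only [apply_ite card, card_singleton, card_univ]
  rw [prod_ite, prod_const_one, one_mul, prod_const, filter_not, filter_mem_eq_inter, univ_inter,
    compl_eq_univ_sdiff]

theorem card_filter_forall_mem_eq_and_forall_mem_eq (S S' : Finset ι) (f g : ι → β) :
    #{B : ι → β | (∀ j ∈ S, B j = f j) ∧ ∀ j ∈ S', B j = g j} =
      if ∀ j ∈ S ∩ S', f j = g j then Fintype.card β ^ #(S ∪ S')ᶜ else 0 := by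
  split_ifs with hfg
  · have hmerge : ∀ B : ι → β, ((∀ j ∈ S, B j = f j) ∧ ∀ j ∈ S', B j = g j) ↔
        ∀ j ∈ S ∪ S', B j = S.piecewise f g j := by
      intro B
      simp only [mem_union, or_imp, forall_and]
      refine and_congr (forall₂_congr fun j hj => by rw [piecewise_eq_of_mem _ _ _ hj])
        (forall₂_congr fun j hj => ?_)
      by_cases hjS : j ∈ S
      · rw [piecewise_eq_of_mem _ _ _ hjS, hfg j (mem_inter.2 ⟨hjS, hj⟩)]
      · rw [piecewise_eq_of_notMem _ _ _ hjS]
    simp_rw [hmerge]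
    exact card_filter_forall_mem_eq _ _
  · simp only [not_forall] at hfg
    obtain ⟨j, hj, hne⟩ := hfg
    rw [card_eq_zero, filter_eq_empty_iff]
    rintro B - ⟨hf, hg⟩
    exact hne ((hf j (mem_inter.1 hj).1).symm.trans (hg j (mem_inter.1 hj).2))

end AgreeOn

theorem sum_range_sum_range_ite_le {R : Type*} [AddCommMonoid R] (L : ℕ) (h : ℕ → R) :
    ∑ k ∈ range L, ∑ l ∈ range L, (if k ≤ l then h (l - k) else 0) =
      ∑ d ∈ range L, (L - d) • h d := by
  calc ∑ k ∈ range L, ∑ l ∈ range L, (if k ≤ l then h (l - k) else 0)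
      = ∑ k ∈ range L, ∑ d ∈ range (L - k), h d := by
        refine sum_congr rfl fun k _ => ?_
        have hIco : {l ∈ range L | k ≤ l} = Ico k L := by
          ext
          simp only [mem_filter, mem_range, mem_Ico]
          omega
        rw [← sum_filter, hIco, sum_Ico_eq_sum_range]
        simp only [Nat.add_sub_cancel_left]
    _ = ∑ d ∈ range L, ∑ k ∈ range (L - d), h d :=
        sum_comm' fun k d => by simp only [mem_range]; omega
    _ = ∑ d ∈ range L, (L - d) • h d := by simp only [sum_const, card_range]

theorem sum_Ico_sub_mul_two {m L : ℕ} (h : m ≤ L) :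
    (∑ d ∈ Ico m L, (L - d)) * 2 = (L - m) * (L - m + 1) := by
  set n := L - m
  have hreflect : ∑ j ∈ range n, (L - (m + j)) = ∑ j ∈ range n, ((n - 1 - j) + 1) :=
    sum_congr rfl fun j hj => by rw [mem_range] at hj; omega
  have hshift : ∑ j ∈ range n, (j + 1) = ∑ j ∈ range (n + 1), j := by
    rw [sum_range_succ', add_zero]
  rw [sum_Ico_eq_sum_range, hreflect, sum_range_reflect (· + 1), hshift, sum_range_id_mul_two,
    Nat.add_sub_cancel, mul_comm]

section Blocks

variable {m M : ℕ}

def window (M m k : ℕ) : Finset (Fin M) := {j | k ≤ (j : ℕ) ∧ (j : ℕ) < k + m}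

def placeAt (T : Fin m → Bool) (k : ℕ) (j : Fin M) : Bool :=
  if h : (j : ℕ) - k < m then T ⟨j - k, h⟩ else false

theorem mem_window {k : ℕ} {j : Fin M} : j ∈ window M m k ↔ k ≤ (j : ℕ) ∧ (j : ℕ) < k + m := by
  simp only [window, mem_filter, mem_univ, true_and]

theorem card_window {k : ℕ} (h : k + m ≤ M) : #(window M m k) = m := by
  have hval : (window M m k).map Fin.valEmbedding = Ico k (k + m) := by
    ext x
    simp only [mem_map, mem_window, Fin.valEmbedding_apply, mem_Ico]
    exact ⟨by rintro ⟨j, hj, rfl⟩; exact hj, fun hx => ⟨⟨x, by omega⟩, hx, rfl⟩⟩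
  rw [← card_map, hval, Nat.card_Ico, Nat.add_sub_cancel_left]

theorem window_inter_window {k l : ℕ} (hkl : k ≤ l) :
    window M m k ∩ window M m l = window M (m - (l - k)) l := by
  ext j
  simp only [mem_inter, mem_window]
  omega

theorem occursAt_iff_forall_mem_window (T : Fin m → Bool) (B : Fin M → Bool) (k : ℕ) :
    occursAt T B k ↔ ∀ j ∈ window M m k, B j = placeAt T k j := by
  constructor
  · intro h j hj
    rw [mem_window] at hj
    have hocc := h ⟨j - k, by omega⟩ (by simp only; omega)
    rw [placeAt, dif_pos (by omega), ← hocc]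
    exact congrArg B (Fin.ext (by simp only; omega))
  · intro h i hi
    rw [h ⟨k + i, hi⟩ (mem_window.2 ⟨by simp, by simp [i.2]⟩), placeAt, dif_pos (by simp)]
    simp

theorem placeAt_eq_on_window_inter_iff (U V : Fin m → Bool) {k l : ℕ} (hkl : k ≤ l)
    (hk : k + m ≤ M) :
    (∀ j ∈ window M m k ∩ window M m l, placeAt U k j = placeAt V l j) ↔
      ∀ i (h : i < m - (l - k)), U ⟨i + (l - k), by omega⟩ = V ⟨i, by omega⟩ := by
  rw [window_inter_window hkl]
  constructor
  · intro h i hi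
    have := h ⟨l + i, by omega⟩ (mem_window.2 ⟨by simp, by simp; omega⟩)
    rw [placeAt, placeAt, dif_pos (by simp; omega), dif_pos (by simp; omega)] at this
    simp only at this
    convert this using 3 <;> omega
  · intro h j hj
    rw [mem_window] at hj
    rw [placeAt, placeAt, dif_pos (by omega), dif_pos (by omega)]
    convert h (j - l) (by omega) using 3
    omega

theorem card_occursAt (T : Fin m → Bool) {k : ℕ} (hk : k + m ≤ M) :
    #{B : Fin M → Bool | occursAt T B k} = 2 ^ (M - m) := by
  have h := card_filter_forall_mem_eq (window M m k) (placeAt T k)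
  rw [card_compl, Fintype.card_fin, Fintype.card_bool, card_window hk] at h
  convert h using 3 with B
  exact occursAt_iff_forall_mem_window T B k

theorem card_occursAt_and_occursAt (U V : Fin m → Bool) {k l : ℕ} (hkl : k ≤ l)
    (hl : l + m ≤ M) :
    #{B : Fin M → Bool | occursAt U B k ∧ occursAt V B l} =
      if ∀ i (h : i < m - (l - k)), U ⟨i + (l - k), by omega⟩ = V ⟨i, by omega⟩
      then 2 ^ (M - (m + min (l - k) m)) else 0 := by
  have hunion : #(window M m k ∪ window M m l) = m + min (l - k) m := by
    rw [card_union, window_inter_window hkl, card_window (by omega), card_window hl,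
      card_window (by omega)]
    omega
  have h := card_filter_forall_mem_eq_and_forall_mem_eq (window M m k) (window M m l)
    (placeAt U k) (placeAt V l)
  rw [card_compl, Fintype.card_fin, Fintype.card_bool, hunion] at h
  convert h using 3 with B
  · exact and_congr (occursAt_iff_forall_mem_window U B k) (occursAt_iff_forall_mem_window V B l)
  · exact (placeAt_eq_on_window_inter_iff U V hkl (by omega)).symm

end Blocks

section Expectation

variable {m M : ℕ}

theorem unifExp_sum {α : Type*} (s : Finset α) (f : α → (Fin M → Bool) → ℝ) :
    unifExp M (fun B => ∑ a ∈ s, f a B) = ∑ a ∈ s, unifExp M (f a) := by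
  simp only [unifExp]
  rw [sum_comm, sum_div]

theorem unifExp_ite (P : (Fin M → Bool) → Prop) [DecidablePred P] :
    unifExp M (fun B => if P B then 1 else 0) = #{B | P B} / 2 ^ M := by
  rw [unifExp, sum_boole]

theorem natCast_two_pow_sub_div_two_pow {a : ℕ} (h : a ≤ M) :
    ((2 ^ (M - a) : ℕ) : ℝ) / 2 ^ M = 1 / 2 ^ a := by
  rw [Nat.cast_pow, Nat.cast_ofNat, pow_sub₀ _ two_ne_zero h]
  field_simp

theorem unifExp_occursAt (T : Fin m → Bool) {k : ℕ} (hk : k + m ≤ M) :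
    unifExp M (fun B => if occursAt T B k then 1 else 0) = 1 / 2 ^ m := by
  rw [unifExp_ite, card_occursAt T hk, natCast_two_pow_sub_div_two_pow (by omega)]

/-- For every `d`, `eMinus U V d` records whether `U` at `k` and `V` at `k + d` agree on their
overlap: at `d = 0` it means `U = V`, and for `d ≥ m` it holds vacuously. -/
noncomputable def jointOccProb (U V : Fin m → Bool) (d : ℕ) : ℝ :=
  eMinus U V d / 2 ^ (m + min d m)

theorem unifExp_occursAt_and_occursAt (U V : Fin m → Bool) {k l : ℕ} (hkl : k ≤ l)
    (hl : l + m ≤ M) :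
    unifExp M (fun B => if occursAt U B k ∧ occursAt V B l then 1 else 0) =
      jointOccProb U V (l - k) := by
  rw [unifExp_ite, card_occursAt_and_occursAt U V hkl hl, jointOccProb, eMinus]
  split_ifs
  · rw [natCast_two_pow_sub_div_two_pow (by omega)]
  · simp

theorem eMinus_zero_of_ne {U V : Fin m → Bool} (hUV : U ≠ V) : eMinus U V 0 = 0 := by
  rw [eMinus, if_neg]
  exact fun h => hUV (funext fun i => h i i.2)

theorem eMinus_of_le {U V : Fin m → Bool} {d : ℕ} (hd : m ≤ d) : eMinus U V d = 1 := by
  rw [eMinus, if_pos]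
  intro i hi
  omega

theorem eMinus_swap (U V : Fin m → Bool) (d : ℕ) : eMinus V U d = ePlus U V d := by
  simp only [eMinus, ePlus, eq_comm]

theorem unifExp_occCount (T : Fin m → Bool) :
    unifExp M (fun B => (occCount T B : ℝ)) = (M + 1 - m : ℕ) / 2 ^ m := by
  simp only [occCount, natCast_card_filter]
  rw [unifExp_sum, sum_congr rfl fun k hk => unifExp_occursAt T (by rw [mem_range] at hk; omega),
    sum_const, card_range, nsmul_eq_mul, mul_one_div]

theorem unifExp_occCount_mul_occCount {T1 T2 : Fin m → Bool} (hT : T1 ≠ T2) :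
    unifExp M (fun B => (occCount T1 B : ℝ) * occCount T2 B) =
      ∑ d ∈ range (M + 1 - m),
        (M + 1 - m - d) • (jointOccProb T1 T2 d + jointOccProb T2 T1 d) := by
  set L := M + 1 - m
  have hpair : ∀ k ∈ range L, ∀ l ∈ range L,
      unifExp M (fun B => if occursAt T1 B k ∧ occursAt T2 B l then 1 else 0) =
        (if k ≤ l then jointOccProb T1 T2 (l - k) else 0) +
          (if l ≤ k then jointOccProb T2 T1 (k - l) else 0) := by
    intro k hk l hl
    rw [mem_range] at hk hl
    rcases lt_trichotomy k l with hkl | rfl | hlk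
    · rw [unifExp_occursAt_and_occursAt T1 T2 hkl.le (by omega), if_pos hkl.le,
        if_neg (not_le.2 hkl), add_zero]
    · rw [unifExp_occursAt_and_occursAt T1 T2 le_rfl (by omega)]
      simp only [jointOccProb, Nat.sub_self, eMinus_zero_of_ne hT, eMinus_zero_of_ne hT.symm,
        le_refl, if_true, zero_div, add_zero]
    · simp_rw [and_comm (a := occursAt T1 _ k)]
      rw [unifExp_occursAt_and_occursAt T2 T1 hlk.le (by omega), if_neg (not_le.2 hlk),
        if_pos hlk.le, zero_add]
  simp only [occCount, natCast_card_filter, sum_mul_sum, ite_zero_mul_ite_zero, mul_one,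
    unifExp_sum]
  rw [sum_congr rfl fun k hk => sum_congr rfl fun l hl => hpair k hk l hl]
  simp only [sum_add_distrib]
  rw [sum_range_sum_range_ite_le, sum_comm, sum_range_sum_range_ite_le, ← sum_add_distrib]
  simp only [smul_add]

theorem sum_nsmul_jointOccProb {U V : Fin m → Bool} (hUV : U ≠ V) {L : ℕ} (hmL : m ≤ L) :
    ∑ d ∈ range L, (L - d) • jointOccProb U V d =
      ∑ d ∈ Icc 1 (m - 1), ((L : ℝ) - d) * eMinus U V d / 2 ^ (m + d) +
        ((L : ℝ) - m) * ((L : ℝ) - m + 1) / 2 / 2 ^ (2 * m) := by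
  rw [range_eq_Ico, ← sum_Ico_consecutive _ (Nat.zero_le m) hmL]
  congr 1
  · rw [← sum_subset (s₁ := Icc 1 (m - 1))
      (fun d hd => by simp only [mem_Icc, mem_Ico] at hd ⊢; omega) fun d hd hd' => by
        obtain rfl : d = 0 := by simp only [mem_Icc, mem_Ico] at hd hd'; omega
        rw [jointOccProb, eMinus_zero_of_ne hUV, zero_div, smul_zero]]
    refine sum_congr rfl fun d hd => ?_
    rw [mem_Icc] at hd
    rw [jointOccProb, min_eq_left (by omega), nsmul_eq_mul, Nat.cast_sub (by omega), mul_div_assoc]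
  · have hfar : ∀ d ∈ Ico m L,
        (L - d) • jointOccProb U V d = (L - d) • (1 / 2 ^ (2 * m) : ℝ) := by
      intro d hd
      rw [mem_Ico] at hd
      rw [jointOccProb, eMinus_of_le hd.1, min_eq_right hd.1, two_mul]
    rw [sum_congr rfl hfar, ← sum_smul, nsmul_eq_mul]
    have hgauss :
        ((∑ d ∈ Ico m L, (L - d) : ℕ) : ℝ) * 2 = ((L : ℝ) - m) * ((L : ℝ) - m + 1) := by
      rw [← Nat.cast_sub hmL]
      exact_mod_cast sum_Ico_sub_mul_two hmL
    rw [eq_div_of_mul_eq two_ne_zero hgauss]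
    ring

end Expectation

theorem covariance_occCounts_general (m M : ℕ) (T1 T2 : Fin m → Bool) (hT : T1 ≠ T2)
    (hL : m ≤ M + 1 - m) :
    unifExp M (fun B => (occCount T1 B : ℝ) * (occCount T2 B : ℝ))
        - unifExp M (fun B => (occCount T1 B : ℝ)) * unifExp M (fun B => (occCount T2 B : ℝ))
      = (∑ d ∈ Finset.Icc 1 (m - 1),
          (((M : ℝ) - m + 1) - d) * (ePlus T1 T2 d + eMinus T1 T2 d) / 2 ^ (m + d))
        + ((((M : ℝ) - m + 1) - m) * (((M : ℝ) - m + 1) - m + 1) - ((M : ℝ) - m + 1) ^ 2)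
            / 2 ^ (2 * m) := by
  have hLcast : ((M + 1 - m : ℕ) : ℝ) = M - m + 1 := by
    rw [Nat.cast_sub (by omega)]
    push_cast
    ring
  rw [unifExp_occCount_mul_occCount hT, unifExp_occCount, unifExp_occCount]
  simp only [smul_add, sum_add_distrib]
  rw [sum_nsmul_jointOccProb hT hL, sum_nsmul_jointOccProb hT.symm hL, hLcast]
  simp only [eMinus_swap, mul_add, add_div, sum_add_distrib]
  ring

theorem covariance_occCounts (m M : ℕ) (hm : 1 ≤ m) (T1 T2 : Fin m → Bool) (hT : T1 ≠ T2)
    (hL : m ≤ M + 1 - m) :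
    unifExp M (fun B => (occCount T1 B : ℝ) * (occCount T2 B : ℝ))
        - unifExp M (fun B => (occCount T1 B : ℝ)) * unifExp M (fun B => (occCount T2 B : ℝ))
      = (∑ d ∈ Finset.Icc 1 (m - 1),
          (((M : ℝ) - m + 1) - d) * (ePlus T1 T2 d + eMinus T1 T2 d) / 2 ^ (m + d))
        + ((((M : ℝ) - m + 1) - m) * (((M : ℝ) - m + 1) - m + 1) - ((M : ℝ) - m + 1) ^ 2)
            / 2 ^ (2 * m) :=
  covariance_occCounts_general m M T1 T2 hT hL
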